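/- arXiv:2405.06670 — 4 statements merged into one kernel-verified Lean document; each statement's English description precedes it below -/
import Mathlib

section
/- For x ∈ ℝ^n, a binary vector w ∈ {0,1}^n that is not identically zero, and hyperparameters h > 0, β > 0, suppose h·e^{βh} > (n-1)·e^{-1}/β. Then the sparse softmax is sound: S(x,w) > 0 if and only if max_w(x) > 0, and equivalently S(x,w) ≤ 0 if and only if max_w(x) ≤ 0. -/
open Finset

/-- The masked maximum `max_w(x) = max { x_i : w_i = 1 }` (as a supremum of the
finite set of selected coordinates). -/
noncomputable def maskedMax {n : ℕ} (x w : Fin n → ℝ) : ℝ :=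
  sSup {y : ℝ | ∃ i, w i = 1 ∧ x i = y}

/-- The masked minimum `min { x_i : w_i = 1 }`. -/
noncomputable def maskedMin {n : ℕ} (x w : Fin n → ℝ) : ℝ :=
  sInf {y : ℝ | ∃ i, w i = 1 ∧ x i = y}

/-- The sparse softmax function `S(x,w)` with hyperparameters `h, β`:
`x'_i = x_i w_i`;  `x_m = |max_i x'_i|` if `max_i x'_i ≠ 0` and `x_m = 1` otherwise;
`x''_i = h x'_i / x_m`;  `q_i = e^{β x''_i} / Σ_j e^{β x''_j}`;
`S(x,w) = (Σ_i x_i w_i q_i) / (Σ_i w_i q_i)`. -/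
noncomputable def sparseSoftmax {n : ℕ} (x w : Fin n → ℝ) (h β : ℝ) : ℝ :=
  let x' : Fin n → ℝ := fun i => x i * w i
  let xmax : ℝ := sSup (Set.range x')
  let xm : ℝ := if xmax ≠ 0 then |xmax| else 1
  let x'' : Fin n → ℝ := fun i => h * x' i / xm
  let q : Fin n → ℝ := fun i => Real.exp (β * x'' i) / ∑ j, Real.exp (β * x'' j)
  (∑ i, x i * w i * q i) / (∑ i, w i * q i)

/-- `u e^u ≥ -e^{-1}` for all real `u`. -/
lemma aux_ue (u : ℝ) : -Real.exp (-1) ≤ u * Real.exp u := by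
  rcases le_or_gt 0 u with hu | hu
  · have h1 : 0 ≤ u * Real.exp u := mul_nonneg hu (Real.exp_pos u).le
    linarith [Real.exp_pos (-1 : ℝ)]
  · have h1 : -u ≤ Real.exp (-1 - u) := by
      have := Real.add_one_le_exp (-1 - u); linarith
    have h2 : (-u) * Real.exp u ≤ Real.exp (-1 - u) * Real.exp u :=
      mul_le_mul_of_nonneg_right h1 (Real.exp_pos u).le
    rw [← Real.exp_add] at h2
    have h3 : (-1 - u) + u = -1 := by ring
    rw [h3] at h2
    linarith

/-- `t e^{ct} ≥ -e^{-1}/c` for `c > 0`. -/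
lemma aux2 (c t : ℝ) (hc : 0 < c) : -(Real.exp (-1) / c) ≤ t * Real.exp (c * t) := by
  have h := aux_ue (c * t)
  have h2 : (-Real.exp (-1)) / c ≤ (c * t * Real.exp (c * t)) / c := by gcongr
  have h3 : (c * t * Real.exp (c * t)) / c = t * Real.exp (c * t) := by
    field_simp
  rw [h3, neg_div] at h2
  exact h2

lemma div_sign_pos {a b : ℝ} (hb : 0 < b) : 0 < a / b ↔ 0 < a := by
  rw [lt_div_iff₀ hb, zero_mul]

lemma div_sign_nonpos {a b : ℝ} (hb : 0 < b) : a / b ≤ 0 ↔ a ≤ 0 := by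
  rw [div_le_iff₀ hb, zero_mul]

/-- Soundness of the sparse softmax: if `w ∈ {0,1}^n` is not identically zero,
`h > 0`, `β > 0` and `h·e^{βh} > (n-1)·e^{-1}/β`, then `S(x,w) > 0 ↔ max_w(x) > 0`
and equivalently `S(x,w) ≤ 0 ↔ max_w(x) ≤ 0`. -/
theorem sparse_softmax_sound {n : ℕ} (x w : Fin n → ℝ)
    (hw : ∀ i, w i = 0 ∨ w i = 1) (hnz : ∃ i, w i = 1)
    (h β : ℝ) (hh : 0 < h) (hβ : 0 < β)
    (hcond : h * Real.exp (β * h) > ((n : ℝ) - 1) * Real.exp (-1) / β) :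
    (sparseSoftmax x w h β > 0 ↔ maskedMax x w > 0) ∧
    (sparseSoftmax x w h β ≤ 0 ↔ maskedMax x w ≤ 0) := by
  classical
  obtain ⟨j0, hj0⟩ := hnz
  have hn : 0 < n := j0.pos
  have hne : Nonempty (Fin n) := ⟨j0⟩
  set x' : Fin n → ℝ := fun i => x i * w i with hx'def
  set xmax : ℝ := sSup (Set.range x') with hxmax_def
  set xm : ℝ := if xmax ≠ 0 then |xmax| else 1 with hxm_def
  set E : Fin n → ℝ := fun i => Real.exp (β * (h * x' i / xm)) with hE_def
  set Z : ℝ := ∑ j, E j with hZ_def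
  have hS : sparseSoftmax x w h β = ((∑ i, x' i * E i) / Z) / ((∑ i, w i * E i) / Z) := by
    show (∑ i, x i * w i * (E i / Z)) / (∑ i, w i * (E i / Z)) = _
    simp only [Finset.sum_div, mul_div_assoc]
    rfl
  have hEpos : ∀ i, 0 < E i := fun i => Real.exp_pos _
  have hZ : 0 < Z := Finset.sum_pos (fun i _ => hEpos i) ⟨j0, Finset.mem_univ j0⟩
  have hW : 0 < ∑ i, w i * E i := by
    apply Finset.sum_pos'
    · intro i _
      rcases hw i with h0 | h1
      · rw [h0]; simp
      · rw [h1, one_mul]; exact (hEpos i).le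
    · exact ⟨j0, Finset.mem_univ j0, by rw [hj0, one_mul]; exact hEpos j0⟩
  -- masked max facts
  set M := maskedMax x w with hM_def
  set A : Set ℝ := {y : ℝ | ∃ i, w i = 1 ∧ x i = y} with hA_def
  have hAfin : A.Finite := Set.Finite.subset (Set.finite_range x)
    (by rintro y ⟨i, _, rfl⟩; exact ⟨i, rfl⟩)
  have hAne : A.Nonempty := ⟨x j0, j0, hj0, rfl⟩
  have hMA : M = sSup A := rfl
  have hMmem : M ∈ A := by rw [hMA]; exact hAne.csSup_mem hAfin
  have hMub : ∀ i, w i = 1 → x i ≤ M := fun i hi => by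
    rw [hMA]; exact le_csSup hAfin.bddAbove ⟨i, hi, rfl⟩
  -- the two key implications
  have hneg : M ≤ 0 → (∑ i, x' i * E i) ≤ 0 := by
    intro hM0
    apply Finset.sum_nonpos
    intro i _
    have hx'le : x' i ≤ 0 := by
      rcases hw i with h0 | h1
      · simp [hx'def, h0]
      · have := hMub i h1
        simp only [hx'def]
        rw [h1, mul_one]
        linarith
    exact mul_nonpos_iff.mpr (Or.inr ⟨hx'le, (hEpos i).le⟩)
  have hpos : 0 < M → 0 < (∑ i, x' i * E i) := by
    intro hM0
    obtain ⟨j, hj1, hjM⟩ := hMmem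
    have hx'j : x' j = M := by simp only [hx'def]; rw [hj1, mul_one]; exact hjM
    have hxmaxM : xmax = M := by
      apply le_antisymm
      · apply csSup_le (Set.range_nonempty x')
        rintro y ⟨i, rfl⟩
        rcases hw i with h0 | h1
        · simp only [hx'def]; rw [h0, mul_zero]; linarith
        · simp only [hx'def]; rw [h1, mul_one]; exact hMub i h1
      · rw [← hx'j]
        exact le_csSup (Set.Finite.bddAbove (Set.finite_range x')) ⟨j, rfl⟩
    have hxne : xmax ≠ 0 := by rw [hxmaxM]; exact ne_of_gt hM0
    have hxmM : xm = M := by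
      rw [hxm_def, if_pos hxne, hxmaxM, abs_of_pos hM0]
    set c : ℝ := β * h / M with hc_def
    have hc : 0 < c := div_pos (mul_pos hβ hh) hM0
    have harg : ∀ i, β * (h * x' i / xm) = c * x' i := by
      intro i; rw [hxmM, hc_def]; ring
    have hEi : ∀ i, E i = Real.exp (c * x' i) := by
      intro i
      show Real.exp (β * (h * x' i / xm)) = _
      rw [harg i]
    have hterm : ∀ i, -(Real.exp (-1) / c) ≤ x' i * E i := by
      intro i; rw [hEi i]; exact aux2 c (x' i) hc
    have htermj : x' j * E j = M * Real.exp (β * h) := by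
      rw [hEi j, hx'j, hc_def, div_mul_cancel₀ _ (ne_of_gt hM0)]
    have hsplit : (∑ i, x' i * E i) =
        x' j * E j + ∑ i ∈ Finset.univ.erase j, x' i * E i :=
      (Finset.add_sum_erase _ _ (Finset.mem_univ j)).symm
    have hcard : (Finset.univ.erase j).card = n - 1 := by
      rw [Finset.card_erase_of_mem (Finset.mem_univ j), Finset.card_univ, Fintype.card_fin]
    have hsum2 : ((n : ℝ) - 1) * (-(Real.exp (-1) / c)) ≤
        ∑ i ∈ Finset.univ.erase j, x' i * E i := by
      have hb := Finset.card_nsmul_le_sum (Finset.univ.erase j) (fun i => x' i * E i)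
        (-(Real.exp (-1) / c)) (fun i _ => hterm i)
      rw [hcard, nsmul_eq_mul] at hb
      have hcast : ((n - 1 : ℕ) : ℝ) = (n : ℝ) - 1 := by
        rw [Nat.cast_sub hn, Nat.cast_one]
      rw [hcast] at hb
      exact hb
    have hβh : 0 < β * h := mul_pos hβ hh
    have h1 : ((n : ℝ) - 1) * Real.exp (-1) < h * Real.exp (β * h) * β :=
      (div_lt_iff₀ hβ).mp hcond
    have h2 : ((n : ℝ) - 1) * (Real.exp (-1) / c) < M * Real.exp (β * h) := by
      have heq : ((n : ℝ) - 1) * (Real.exp (-1) / c) =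
          ((n : ℝ) - 1) * Real.exp (-1) * M / (β * h) := by
        rw [hc_def]; field_simp
      rw [heq, div_lt_iff₀ hβh]
      nlinarith [mul_lt_mul_of_pos_left h1 hM0]
    rw [hsplit]
    nlinarith [hsum2, h2, htermj]
  -- assemble
  have hiff1 : (0 < ∑ i, x' i * E i) ↔ 0 < M := by
    constructor
    · intro hT; by_contra hM; push_neg at hM; linarith [hneg hM]
    · exact hpos
  have hiff2 : (∑ i, x' i * E i) ≤ 0 ↔ M ≤ 0 := by
    constructor
    · intro hT; by_contra hM; push_neg at hM; linarith [hpos hM]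
    · exact hneg
  rw [hS]
  constructor
  · rw [gt_iff_lt, div_sign_pos (div_pos hW hZ), div_sign_pos hZ, gt_iff_lt]
    exact hiff1
  · rw [div_sign_nonpos (div_pos hW hZ), div_sign_nonpos hZ]
    exact hiff2
end

section
/- The softmax approximation of the masked maximum is not sound: there exist n ≥ 1, a vector x ∈ ℝ^n, a binary vector w ∈ {0,1}^n that is not identically zero, and β > 0 such that max{ x_i : w_i = 1 } > 0 but s(x,w) < 0. (For instance n = 5, x = (1, 0.1, -0.1, -1, -2), w = (0,1,1,1,1), β = 1.) -/
open Finset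

/-- The softmax function
`s(x,w) = (Σ_i x_i·w_i·e^{β x_i}) / (Σ_i w_i·e^{β x_i})`. -/
noncomputable def softmax {n : ℕ} (x w : Fin n → ℝ) (β : ℝ) : ℝ :=
  (∑ i, x i * w i * Real.exp (β * x i)) / (∑ i, w i * Real.exp (β * x i))

/-- The softmax approximation of the masked maximum is not sound: there exist
`n ≥ 1`, `x ∈ ℝ^n`, a binary `w ∈ {0,1}^n` not identically zero, and `β > 0` with
`max { x_i : w_i = 1 } > 0` but `s(x,w) < 0`. -/
theorem softmax_not_sound :
    ∃ (n : ℕ), 1 ≤ n ∧ ∃ (x w : Fin n → ℝ) (β : ℝ),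
      (∀ i, w i = 0 ∨ w i = 1) ∧ (∃ i, w i = 1) ∧ 0 < β ∧
      maskedMax x w > 0 ∧ softmax x w β < 0 := by
  refine ⟨2, by norm_num, ![1/10, -1], ![1, 1], 1, ?_, ⟨0, rfl⟩, one_pos, ?_, ?_⟩
  · intro i; fin_cases i <;> simp
  · -- maskedMax > 0
    have hmem : (1/10 : ℝ) ∈ {y : ℝ | ∃ i, (![1,1] : Fin 2 → ℝ) i = 1 ∧ (![1/10,-1] : Fin 2 → ℝ) i = y} :=
      ⟨0, rfl, rfl⟩
    have hbdd : BddAbove {y : ℝ | ∃ i, (![1,1] : Fin 2 → ℝ) i = 1 ∧ (![1/10,-1] : Fin 2 → ℝ) i = y} := by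
      refine ⟨1/10, ?_⟩
      rintro y ⟨i, -, rfl⟩
      fin_cases i <;> norm_num
    have := le_csSup hbdd hmem
    have : (0:ℝ) < sSup {y : ℝ | ∃ i, (![1,1] : Fin 2 → ℝ) i = 1 ∧ (![1/10,-1] : Fin 2 → ℝ) i = y} := by
      linarith
    simpa [maskedMax] using this
  · -- softmax < 0
    have key : (1/10 : ℝ) * Real.exp (1/10) < Real.exp (-1) := by
      have hb : (0:ℝ) < Real.exp 1 := Real.exp_pos 1
      have e1 := Real.exp_one_lt_d9
      have h01 : Real.exp (1/10) < Real.exp 1 := Real.exp_lt_exp.2 (by norm_num)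
      have hp : (0:ℝ) < Real.exp (1/10) := Real.exp_pos _
      rw [Real.exp_neg, inv_eq_one_div, lt_div_iff₀ hb]
      nlinarith
    have hnum : (1/10 : ℝ) * 1 * Real.exp (1 * (1/10)) + (-1) * 1 * Real.exp (1 * (-1)) < 0 := by
      have := key; simp only [one_mul, mul_one]; linarith
    have hden : (1:ℝ) * Real.exp (1 * (1/10)) + 1 * Real.exp (1 * (-1)) > 0 := by
      positivity
    have : ((1/10 : ℝ) * 1 * Real.exp (1 * (1/10)) + (-1) * 1 * Real.exp (1 * (-1))) /
        ((1:ℝ) * Real.exp (1 * (1/10)) + 1 * Real.exp (1 * (-1))) < 0 :=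
      div_neg_of_neg_of_pos hnum hden
    simpa [softmax, Fin.sum_univ_two] using this
end

section
/- Let n ≥ 1, let x ∈ ℝ^n be sorted in nonincreasing order (x_1 ≥ x_2 ≥ … ≥ x_n), and let p ∈ ℝ^n be arbitrary. Then the averaged-max expansion identity holds: Σ over all nonempty subsets T ⊆ {1,…,n} of ( max_{i ∈ T} x_i ) · ( Π_{i ∈ T} p_i ) · ( Π_{i ∉ T} (1 - p_i) ) = Σ_{i=1}^n x_i · p_i · Π_{j=1}^{i-1} (1 - p_j). -/
open Finset

/-- The averaged-max expansion identity: for `x ∈ ℝ^n` sorted in nonincreasing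
order and arbitrary `p ∈ ℝ^n`,
`Σ_{∅ ≠ T ⊆ {1..n}} (max_{i∈T} x_i)·(Π_{i∈T} p_i)·(Π_{i∉T} (1-p_i))
  = Σ_i x_i·p_i·Π_{j<i} (1-p_j)`. -/
theorem averaged_max_expansion (n : ℕ) (hn : 1 ≤ n) (x p : Fin n → ℝ)
    (hsort : Antitone x) :
    ∑ T ∈ Finset.univ.powerset.filter Finset.Nonempty,
        (sSup (x '' (T : Set (Fin n)))) * (∏ i ∈ T, p i) * ∏ i ∈ Tᶜ, (1 - p i)
      = ∑ i, x i * p i * ∏ j ∈ Finset.univ.filter (fun j => j < i), (1 - p j) := by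
  classical
  have i0 : Fin n := ⟨0, hn⟩
  set g : Finset (Fin n) → Fin n := fun T => if h : T.Nonempty then T.min' h else i0 with hg
  rw [← Finset.sum_fiberwise_of_maps_to (g := g) (t := (univ : Finset (Fin n)))
      (fun T _ => mem_univ _)]
  refine Finset.sum_congr rfl fun i _ => ?_
  have fiber_eq : ((Finset.univ.powerset.filter Finset.Nonempty).filter fun T => g T = i)
      = (Finset.Ioi i).powerset.image (insert i) := by
    ext T
    simp only [mem_filter, mem_powerset, mem_image, subset_univ, true_and]
    constructor
    · rintro ⟨hne, hgT⟩
      rw [hg] at hgT; simp only [dif_pos hne] at hgT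
      refine ⟨T.erase i, ?_, ?_⟩
      · intro j hj
        rw [mem_erase] at hj
        rw [mem_Ioi]
        exact lt_of_le_of_ne (hgT ▸ T.min'_le j hj.2) (Ne.symm hj.1)
      · rw [insert_erase]
        exact hgT ▸ T.min'_mem hne
    · rintro ⟨S, hS, rfl⟩
      refine ⟨insert_nonempty _ _, ?_⟩
      show (if h : (insert i S).Nonempty then (insert i S).min' h else i0) = i
      rw [dif_pos (insert_nonempty i S)]
      refine le_antisymm (min'_le _ _ (mem_insert_self _ _)) ?_
      apply le_min'
      intro y hy
      rcases mem_insert.1 hy with rfl | hy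
      · exact le_refl _
      · exact le_of_lt (mem_Ioi.1 (hS hy))
  have hinj : ∀ a ∈ (Finset.Ioi i).powerset, ∀ b ∈ (Finset.Ioi i).powerset,
      insert i a = insert i b → a = b := by
    intro a ha b hb hab
    have ha' := mem_powerset.1 ha
    have hb' := mem_powerset.1 hb
    have hia : i ∉ a := fun h => lt_irrefl i (mem_Ioi.1 (ha' h))
    have hib : i ∉ b := fun h => lt_irrefl i (mem_Ioi.1 (hb' h))
    rw [← erase_insert hia, ← erase_insert hib, hab]
  rw [fiber_eq, Finset.sum_image hinj]
  have hterm : ∀ S ∈ (Finset.Ioi i).powerset,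
      (sSup (x '' ((insert i S : Finset (Fin n)) : Set (Fin n))))
        * (∏ j ∈ insert i S, p j) * ∏ j ∈ (insert i S)ᶜ, (1 - p j)
      = (x i * p i * ∏ j ∈ Finset.Iio i, (1 - p j))
        * ((∏ j ∈ S, p j) * ∏ j ∈ Finset.Ioi i \ S, (1 - p j)) := by
    intro S hS
    have hS' := mem_powerset.1 hS
    have hiS : i ∉ S := fun h => lt_irrefl i (mem_Ioi.1 (hS' h))
    have hne : (insert i S).Nonempty := insert_nonempty _ _
    have hmax : sSup (x '' ((insert i S : Finset (Fin n)) : Set (Fin n))) = x i := by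
      rw [← Finset.sup'_eq_csSup_image _ hne]
      apply le_antisymm
      · apply Finset.sup'_le
        intro j hj
        rcases mem_insert.1 hj with rfl | hj
        · exact le_refl _
        · exact hsort (le_of_lt (mem_Ioi.1 (hS' hj)))
      · exact Finset.le_sup' x (mem_insert_self _ _)
    have hp : ∏ j ∈ insert i S, p j = p i * ∏ j ∈ S, p j := prod_insert hiS
    have hcompl : (insert i S)ᶜ = Finset.Iio i ∪ (Finset.Ioi i \ S) := by
      ext j
      simp only [mem_compl, mem_insert, mem_union, mem_Iio, mem_sdiff, mem_Ioi]
      constructor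
      · intro h
        push_neg at h
        rcases lt_trichotomy j i with hlt | rfl | hgt
        · exact Or.inl hlt
        · exact absurd rfl h.1
        · exact Or.inr ⟨hgt, h.2⟩
      · rintro (hlt | ⟨hgt, hjS⟩)
        · push_neg
          exact ⟨fun h => absurd hlt (h ▸ lt_irrefl i), fun h => absurd (mem_Ioi.1 (hS' h)) (not_lt.2 (le_of_lt hlt))⟩
        · push_neg
          exact ⟨fun h => absurd hgt (h ▸ lt_irrefl i), hjS⟩
    have hdisj : Disjoint (Finset.Iio i) (Finset.Ioi i \ S) := by
      apply Finset.disjoint_left.2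
      intro j hj hj'
      exact absurd (mem_Ioi.1 (mem_sdiff.1 hj').1) (not_lt.2 (le_of_lt (mem_Iio.1 hj)))
    rw [hmax, hp, hcompl, prod_union hdisj]
    ring
  rw [Finset.sum_congr rfl hterm, ← Finset.mul_sum]
  have hbin : ∑ S ∈ (Finset.Ioi i).powerset,
      (∏ j ∈ S, p j) * ∏ j ∈ Finset.Ioi i \ S, (1 - p j) = 1 := by
    rw [← Finset.prod_add]
    simp
  rw [hbin, mul_one]
  have : Finset.Iio i = Finset.univ.filter (fun j => j < i) := by
    ext j; simp [Finset.mem_Iio]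
  rw [this]
end

section
/- Let n ≥ 1, let x ∈ ℝ^n be sorted in nonincreasing order (x_1 ≥ x_2 ≥ … ≥ x_n), and let p ∈ ℝ^n be arbitrary. Then the averaged-min expansion identity holds: Σ over all nonempty subsets T ⊆ {1,…,n} of ( min_{i ∈ T} x_i ) · ( Π_{i ∈ T} p_i ) · ( Π_{i ∉ T} (1 - p_i) ) = Σ_{i=1}^n x_i · p_i · Π_{j=i+1}^{n} (1 - p_j). -/
open Finset

/-- The averaged-min expansion identity: for `x ∈ ℝ^n` sorted in nonincreasing
order and arbitrary `p ∈ ℝ^n`,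
`Σ_{∅ ≠ T ⊆ {1..n}} (min_{i∈T} x_i)·(Π_{i∈T} p_i)·(Π_{i∉T} (1-p_i))
  = Σ_i x_i·p_i·Π_{j>i} (1-p_j)`. -/
theorem averaged_min_expansion (n : ℕ) (hn : 1 ≤ n) (x p : Fin n → ℝ)
    (hsort : Antitone x) :
    ∑ T ∈ Finset.univ.powerset.filter Finset.Nonempty,
        (sInf (x '' (T : Set (Fin n)))) * (∏ i ∈ T, p i) * ∏ i ∈ Tᶜ, (1 - p i)
      = ∑ i, x i * p i * ∏ j ∈ Finset.univ.filter (fun j => i < j), (1 - p j) := by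
  have hIoi : ∀ i : Fin n, Finset.univ.filter (fun j => i < j) = Finset.Ioi i := by
    intro i; ext j; simp
  have key : ∀ (T : Finset (Fin n)) (hT : T.Nonempty),
      sInf (x '' (T : Set (Fin n))) = x (T.max' hT) := by
    intro T hT
    apply IsLeast.csInf_eq
    constructor
    · exact ⟨T.max' hT, by simpa using T.max'_mem hT, rfl⟩
    · rintro y ⟨a, ha, rfl⟩
      exact hsort (T.le_max' a (by simpa using ha))
  have expand : ∀ i : Fin n,
      x i * p i * ∏ j ∈ Finset.Ioi i, (1 - p j)
        = ∑ S ∈ (Finset.Iio i).powerset,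
            x i * (p i * ∏ j ∈ S, p j) *
              ((∏ j ∈ Finset.Iio i \ S, (1 - p j)) * ∏ j ∈ Finset.Ioi i, (1 - p j)) := by
    intro i
    have one : ∑ S ∈ (Finset.Iio i).powerset,
        (∏ j ∈ S, p j) * ∏ j ∈ Finset.Iio i \ S, (1 - p j) = 1 := by
      rw [← Finset.prod_add]; simp
    calc x i * p i * ∏ j ∈ Finset.Ioi i, (1 - p j)
        = (x i * p i * ∏ j ∈ Finset.Ioi i, (1 - p j)) *
            ∑ S ∈ (Finset.Iio i).powerset,
              (∏ j ∈ S, p j) * ∏ j ∈ Finset.Iio i \ S, (1 - p j) := by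
          rw [one, mul_one]
      _ = _ := by rw [Finset.mul_sum]; apply Finset.sum_congr rfl; intro S _; ring
  simp only [hIoi, expand]
  rw [Finset.sum_sigma']
  symm
  refine Finset.sum_bij'
    (fun z (_ : z ∈ (Finset.univ : Finset (Fin n)).sigma fun i => (Finset.Iio i).powerset)
      => insert z.1 z.2)
    (fun T hT => ⟨T.max' (Finset.mem_filter.mp hT).2,
      T.erase (T.max' (Finset.mem_filter.mp hT).2)⟩) ?_ ?_ ?_ ?_ ?_
  · intro z hz
    simp only [Finset.mem_filter, Finset.mem_powerset]
    exact ⟨Finset.subset_univ _, Finset.insert_nonempty _ _⟩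
  · intro T hT
    have hne : T.Nonempty := (Finset.mem_filter.mp hT).2
    simp only [Finset.mem_sigma, Finset.mem_univ, Finset.mem_powerset, true_and]
    intro j hj
    simp only [Finset.mem_erase] at hj
    exact Finset.mem_Iio.mpr (lt_of_le_of_ne (T.le_max' j hj.2) hj.1)
  · intro z hz
    simp only [Finset.mem_sigma, Finset.mem_univ, Finset.mem_powerset, true_and] at hz
    obtain ⟨i, S⟩ := z
    have hiS : i ∉ S := fun h => lt_irrefl i (Finset.mem_Iio.mp (hz h))
    have hmax : (insert i S).max' (Finset.insert_nonempty _ _) = i := by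
      apply le_antisymm
      · apply Finset.max'_le
        intro y hy
        rcases Finset.mem_insert.mp hy with rfl | hy
        · exact le_refl _
        · exact le_of_lt (Finset.mem_Iio.mp (hz hy))
      · exact Finset.le_max' _ _ (Finset.mem_insert_self _ _)
    simp only [Sigma.mk.inj_iff, hmax, heq_eq_eq]
    exact ⟨trivial, Finset.erase_insert hiS⟩
  · intro T hT
    have hne : T.Nonempty := (Finset.mem_filter.mp hT).2
    exact Finset.insert_erase (T.max'_mem hne)
  · intro z hz
    simp only [Finset.mem_sigma, Finset.mem_univ, Finset.mem_powerset, true_and] at hz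
    obtain ⟨i, S⟩ := z
    have hiS : i ∉ S := fun h => lt_irrefl i (Finset.mem_Iio.mp (hz h))
    have hne : (insert i S).Nonempty := Finset.insert_nonempty _ _
    have hmax : (insert i S).max' hne = i := by
      apply le_antisymm
      · apply Finset.max'_le
        intro y hy
        rcases Finset.mem_insert.mp hy with rfl | hy
        · exact le_refl _
        · exact le_of_lt (Finset.mem_Iio.mp (hz hy))
      · exact Finset.le_max' _ _ (Finset.mem_insert_self _ _)
    have hcompl : (insert i S)ᶜ = (Finset.Iio i \ S) ∪ Finset.Ioi i := by
      ext j
      simp only [Finset.mem_compl, Finset.mem_insert, Finset.mem_union, Finset.mem_sdiff,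
        Finset.mem_Iio, Finset.mem_Ioi]
      constructor
      · intro h
        push_neg at h
        rcases lt_trichotomy j i with hlt | rfl | hgt
        · exact Or.inl ⟨hlt, h.2⟩
        · exact absurd rfl h.1
        · exact Or.inr hgt
      · rintro (⟨hlt, hns⟩ | hgt)
        · exact not_or.mpr ⟨ne_of_lt hlt, hns⟩
        · refine not_or.mpr ⟨ne_of_gt hgt, fun hs => ?_⟩
          exact absurd (Finset.mem_Iio.mp (hz hs)) (not_lt.mpr (le_of_lt hgt))
    have hdisj : Disjoint (Finset.Iio i \ S) (Finset.Ioi i) :=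
      Finset.disjoint_left.mpr (fun j hj hj' =>
        absurd (Finset.mem_Ioi.mp hj') (not_lt.mpr (le_of_lt (Finset.mem_Iio.mp (Finset.mem_sdiff.mp hj).1))))
    rw [key _ hne, hmax, hcompl, Finset.prod_union hdisj, Finset.prod_insert hiS]
end
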